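/- Let (M, Δ_M) be a right C-comodule which is injective, in the sense that there exists a homomorphism of right C-comodules r : M ⊗ C → M (where M ⊗ C is the cofree comodule with coaction id_M ⊗ Δ) such that r ∘ Δ_M = id_M. Let V be a k-vector space and equip Hom_k(M,V) with the contra-action θ(Φ)(m) = Φ(m₍₁₎)(m₍₀₎). Then the maps s : Hom_k(M,V) → Hom_k(C, Hom_k(M,V)) given by s(f)(c)(m) = f(r(m ⊗ c)), and p : Hom_k(C, Hom_k(M,V)) → Hom_k(M,V) given by p(Ψ)(m) = Ψ(m₍₁₎)(m₍₀₎), are homomorphisms of C-contramodules (with the free contramodule structure on Hom_k(C, Hom_k(M,V))) satisfying p ∘ s = id; hence (Hom_k(M,V), θ) is a retract of a free C-contramodule. -/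

import Mathlib

/-!
Writing `φ̂ : M ⊗ C → V` for the uncurried form of `φ : C → Hom(M, V)`, the contra-action is
`θ(φ) = φ̂ ∘ ρ`. Hence precomposition with a comodule map is a contramodule map, and for the
cofree comodule `M ⊗ C` currying identifies `Hom(M ⊗ C, V)` with the free contramodule
`Hom(C, Hom(M, V))`; `s` is precomposition with `r` followed by this currying. The map `p = θ`
is a contramodule map because coassociativity of `ρ` dualises to contra-associativity of `θ`,
and `p ∘ s` is precomposition with `r ∘ ρ = id`.
-/

open TensorProduct LinearMap

noncomputable section

def IsContramodule (k : Type*) [Field k]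
    (C : Type*) [AddCommGroup C] [Module k C] [Coalgebra k C]
    {B : Type*} [AddCommGroup B] [Module k B]
    (θ : (C →ₗ[k] B) →ₗ[k] B) : Prop :=
  (∀ Φ : C →ₗ[k] (C →ₗ[k] B),
      θ (θ ∘ₗ Φ) = θ ((TensorProduct.lift Φ.flip) ∘ₗ Coalgebra.comul)) ∧
  (∀ b : B, θ ((LinearMap.toSpanSingleton k B b) ∘ₗ Coalgebra.counit) = b)

def IsContraHom (k : Type*) [Field k]
    (C : Type*) [AddCommGroup C] [Module k C] [Coalgebra k C]
    {B D : Type*} [AddCommGroup B] [Module k B] [AddCommGroup D] [Module k D]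
    (θB : (C →ₗ[k] B) →ₗ[k] B) (θD : (C →ₗ[k] D) →ₗ[k] D)
    (f : B →ₗ[k] D) : Prop :=
  ∀ φ : C →ₗ[k] B, f (θB φ) = θD (f ∘ₗ φ)

def IsComodule (k : Type*) [Field k]
    (C : Type*) [AddCommGroup C] [Module k C] [Coalgebra k C]
    {M : Type*} [AddCommGroup M] [Module k M]
    (ρ : M →ₗ[k] M ⊗[k] C) : Prop :=
  ((TensorProduct.assoc k M C C).toLinearMap ∘ₗ (TensorProduct.map ρ LinearMap.id) ∘ₗ ρ
      = (TensorProduct.map LinearMap.id Coalgebra.comul) ∘ₗ ρ) ∧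
  ((TensorProduct.rid k M).toLinearMap ∘ₗ
      (TensorProduct.map LinearMap.id Coalgebra.counit) ∘ₗ ρ = LinearMap.id)

/-- The free contra-action on `Hom_k(C,V)`: `θ_free(Φ)(c) = Φ(c₍₂₎)(c₍₁₎)`. -/
def freeContra (k : Type*) [Field k]
    (C : Type*) [AddCommGroup C] [Module k C] [Coalgebra k C]
    (V : Type*) [AddCommGroup V] [Module k V] :
    (C →ₗ[k] (C →ₗ[k] V)) →ₗ[k] (C →ₗ[k] V) :=
  (LinearMap.lcomp k V (Coalgebra.comul (R := k) (A := C))) ∘ₗ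
    (TensorProduct.uncurry (RingHom.id k) C C V) ∘ₗ (LinearMap.lflip).toLinearMap

/-- The contra-action `θ(Φ)(m) = Φ(m₍₁₎)(m₍₀₎)` on `Hom_k(M,V)`. -/
def comodContra (k : Type*) [Field k]
    (C : Type*) [AddCommGroup C] [Module k C] [Coalgebra k C]
    {M : Type*} [AddCommGroup M] [Module k M]
    (ρ : M →ₗ[k] M ⊗[k] C)
    (V : Type*) [AddCommGroup V] [Module k V] :
    (C →ₗ[k] (M →ₗ[k] V)) →ₗ[k] (M →ₗ[k] V) :=
  (LinearMap.lcomp k V ρ) ∘ₗ (TensorProduct.uncurry (RingHom.id k) M C V) ∘ₗ (LinearMap.lflip).toLinearMap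

/-- The coaction of the cofree right `C`-comodule `M ⊗ C`:
`m ⊗ c ↦ m ⊗ c₍₁₎ ⊗ c₍₂₎`. -/
def cofreeCoaction (k : Type*) [Field k]
    (C : Type*) [AddCommGroup C] [Module k C] [Coalgebra k C]
    (M : Type*) [AddCommGroup M] [Module k M] :
    (M ⊗[k] C) →ₗ[k] (M ⊗[k] C) ⊗[k] C :=
  (TensorProduct.assoc k M C C).symm.toLinearMap ∘ₗ
    (TensorProduct.map LinearMap.id Coalgebra.comul)

section ContraHom

variable {k : Type*} [Field k] {C : Type*} [AddCommGroup C] [Module k C]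
  {M N V : Type*} [AddCommGroup M] [Module k M] [AddCommGroup N] [Module k N]
  [AddCommGroup V] [Module k V]

variable (k C V) in
def curryRight (M : Type*) [AddCommGroup M] [Module k M] :
    (M ⊗[k] C →ₗ[k] V) →ₗ[k] C →ₗ[k] M →ₗ[k] V :=
  LinearMap.lflip.toLinearMap ∘ₗ TensorProduct.lcurry (RingHom.id k) M C V

@[simp]
theorem curryRight_apply (g : M ⊗[k] C →ₗ[k] V) (c : C) (m : M) :
    curryRight k C V M g c m = g (m ⊗ₜ c) := rfl

variable [Coalgebra k C]

theorem comodContra_apply (ρ : M →ₗ[k] M ⊗[k] C) (φ : C →ₗ[k] M →ₗ[k] V) (m : M) :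
    comodContra k C ρ V φ m = TensorProduct.lift φ.flip (ρ m) := rfl

theorem IsContraHom.comp {B D E : Type*} [AddCommGroup B] [Module k B] [AddCommGroup D]
    [Module k D] [AddCommGroup E] [Module k E] {θB : (C →ₗ[k] B) →ₗ[k] B}
    {θD : (C →ₗ[k] D) →ₗ[k] D} {θE : (C →ₗ[k] E) →ₗ[k] E} {g : D →ₗ[k] E} {f : B →ₗ[k] D}
    (hg : IsContraHom k C θD θE g) (hf : IsContraHom k C θB θD f) :
    IsContraHom k C θB θE (g ∘ₗ f) := fun φ => by
  rw [comp_apply, hf, hg, comp_assoc]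

theorem comodContra_curryRight (ρ : M →ₗ[k] M ⊗[k] C) (g : M ⊗[k] C →ₗ[k] V) :
    comodContra k C ρ V (curryRight k C V M g) = g ∘ₗ ρ := by
  ext m
  rw [comodContra_apply, comp_apply]
  congr 1
  ext m c
  rfl

theorem isContraHom_lcomp {ρM : M →ₗ[k] M ⊗[k] C} {ρN : N →ₗ[k] N ⊗[k] C} {f : M →ₗ[k] N}
    (hf : ρN ∘ₗ f = TensorProduct.map f LinearMap.id ∘ₗ ρM) :
    IsContraHom k C (comodContra k C ρN V) (comodContra k C ρM V) (lcomp k V f) := by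
  intro φ
  ext m
  have hfm : ρN (f m) = TensorProduct.map f LinearMap.id (ρM m) := congr($hf m)
  rw [lcomp_apply, comodContra_apply, comodContra_apply, hfm, ← comp_apply]
  congr 1
  ext m c
  rfl

theorem isContraHom_curryRight :
    IsContraHom k C (comodContra k C (cofreeCoaction k C M) V) (freeContra k C (M →ₗ[k] V))
      (curryRight k C V M) := by
  intro g
  ext c m
  change TensorProduct.lift g.flip ((TensorProduct.assoc k M C C).symm (m ⊗ₜ Coalgebra.comul c))
    = TensorProduct.lift (curryRight k C V M ∘ₗ g).flip (Coalgebra.comul c) m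
  induction (Coalgebra.comul (R := k) c) using TensorProduct.induction_on with
  | zero => simp
  | tmul a b => simp
  | add x y hx hy => simp_all [TensorProduct.tmul_add]

theorem isContraHom_comodContra {ρ : M →ₗ[k] M ⊗[k] C}
    (hρ : (TensorProduct.assoc k M C C).toLinearMap ∘ₗ TensorProduct.map ρ LinearMap.id ∘ₗ ρ
      = TensorProduct.map LinearMap.id Coalgebra.comul ∘ₗ ρ) :
    IsContraHom k C (freeContra k C (M →ₗ[k] V)) (comodContra k C ρ V) (comodContra k C ρ V) := by
  intro Φ
  ext m
  -- `E (m ⊗ c₁ ⊗ c₂) = Φ c₂ c₁ m`; both sides factor through it.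
  set E : M ⊗[k] (C ⊗[k] C) →ₗ[k] V := TensorProduct.lift (TensorProduct.lift Φ.flip).flip
  have h_free : TensorProduct.lift (freeContra k C (M →ₗ[k] V) Φ).flip
      = E ∘ₗ TensorProduct.map LinearMap.id Coalgebra.comul :=
    TensorProduct.ext' fun x c => rfl
  have h_iter : TensorProduct.lift (comodContra k C ρ V ∘ₗ Φ).flip
      = E ∘ₗ (TensorProduct.assoc k M C C).toLinearMap ∘ₗ TensorProduct.map ρ LinearMap.id := by
    refine TensorProduct.ext' fun x c => ?_
    change TensorProduct.lift (Φ c).flip (ρ x) = E (TensorProduct.assoc k M C C (ρ x ⊗ₜ c))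
    induction ρ x using TensorProduct.induction_on with
    | zero => simp
    | tmul y a => rfl
    | add y z hy hz => simp_all [TensorProduct.add_tmul]
  have hρm : TensorProduct.assoc k M C C (TensorProduct.map ρ LinearMap.id (ρ m))
      = TensorProduct.map LinearMap.id Coalgebra.comul (ρ m) := congr($hρ m)
  rw [comodContra_apply, comodContra_apply, h_free, h_iter]
  simp only [comp_apply, LinearEquiv.coe_coe, hρm]

end ContraHom

theorem hom_of_injective_comodule_is_retract_of_free
    (k : Type*) [Field k]
    (C : Type*) [AddCommGroup C] [Module k C] [Coalgebra k C]
    (M : Type*) [AddCommGroup M] [Module k M]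
    (ρ : M →ₗ[k] M ⊗[k] C) (hM : IsComodule k C ρ)
    -- `r` is a right `C`-comodule homomorphism splitting the coaction `ρ`:
    (r : M ⊗[k] C →ₗ[k] M)
    (hr_hom : ρ ∘ₗ r = (TensorProduct.map r LinearMap.id) ∘ₗ cofreeCoaction k C M)
    (hr_split : r ∘ₗ ρ = LinearMap.id)
    (V : Type*) [AddCommGroup V] [Module k V] :
    IsContraHom k C (comodContra k C ρ V) (freeContra k C (M →ₗ[k] V))
      ((LinearMap.lflip).toLinearMap ∘ₗ (TensorProduct.lcurry (RingHom.id k) M C V) ∘ₗ (LinearMap.lcomp k V r)) ∧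
    IsContraHom k C (freeContra k C (M →ₗ[k] V)) (comodContra k C ρ V)
      (comodContra k C ρ V) ∧
    (comodContra k C ρ V) ∘ₗ
      ((LinearMap.lflip).toLinearMap ∘ₗ (TensorProduct.lcurry (RingHom.id k) M C V) ∘ₗ (LinearMap.lcomp k V r))
      = LinearMap.id := by
  refine ⟨?_, isContraHom_comodContra hM.1, ?_⟩
  · exact isContraHom_curryRight.comp (isContraHom_lcomp hr_hom)
  · change comodContra k C ρ V ∘ₗ curryRight k C V M ∘ₗ lcomp k V r = LinearMap.id
    ext f : 1
    rw [comp_apply, comp_apply, comodContra_curryRight, lcomp_apply', comp_assoc, hr_split,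
      comp_id, id_apply]

end
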